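/- arXiv:1311.1298 — 6 statements merged into one kernel-verified Lean document; each statement's English description precedes it below -/
import Mathlib

section
/- Let G=(V,E) be a finite simple undirected graph with a vertex coloring c:V→C. For a color c₀, let V_{c₀} be the set of vertices of color c₀, and for V'⊆V let N'(V') denote the set of neighbors of V' (in G) whose color is different from c₀. If G'=(V,E') with E'⊆E is a spanning subgraph in which every connected component is colorful (no two vertices of the same color in one component), then for every subset V'⊆V_{c₀}, the number of vertices of V' that are isolated (have degree 0) in G' is at least |V'| − |N'(V')|. -/
open scoped Classical

namespace SimpleGraph

variable {V C : Type*} {G' : SimpleGraph V} {c : V → C}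

theorem color_ne_of_adj_of_colorful
    (hcolorful : ∀ u v : V, G'.Reachable u v → c u = c v → u = v) {u w : V}
    (h : G'.Adj u w) : c u ≠ c w :=
  fun hc => G'.ne_of_adj h (hcolorful u w h.reachable hc)

theorem eq_of_adj_of_adj_of_colorful
    (hcolorful : ∀ u v : V, G'.Reachable u v → c u = c v → u = v) {u v w : V}
    (hu : G'.Adj u w) (hv : G'.Adj v w) (hc : c u = c v) : u = v :=
  hcolorful u v (hu.reachable.trans hv.reachable.symm) hc

/-- Each non-isolated vertex of `S` is matched to one of its `G'`-neighbours; no two vertices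
of `S` share such a neighbour, since they would lie in one colorful component. -/
theorem card_filter_not_isolated_le_of_colorful [Fintype V] {G : SimpleGraph V} (hsub : G' ≤ G)
    (hcolorful : ∀ u v : V, G'.Reachable u v → c u = c v → u = v)
    {S : Finset V} {c₀ : C} (hS : ∀ v ∈ S, c v = c₀) :
    (S.filter fun v => ¬ ∀ w, ¬ G'.Adj v w).card ≤
      (Finset.univ.filter fun w => c w ≠ c₀ ∧ ∃ v ∈ S, G.Adj v w).card := by
  refine Finset.card_le_card_of_forall_subsingleton G'.Adj ?_ ?_
  · intro v hv
    obtain ⟨hvS, hv⟩ := Finset.mem_filter.mp hv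
    obtain ⟨w, hvw⟩ := not_forall_not.mp hv
    have hcw : c w ≠ c₀ := hS v hvS ▸ (color_ne_of_adj_of_colorful hcolorful hvw).symm
    exact ⟨w, Finset.mem_filter.mpr ⟨Finset.mem_univ w, hcw, v, hvS, hsub hvw⟩, hvw⟩
  · rintro w - u ⟨hu, huw⟩ v ⟨hv, hvw⟩
    exact eq_of_adj_of_adj_of_colorful hcolorful huw hvw
      ((hS u (Finset.mem_filter.mp hu).1).trans (hS v (Finset.mem_filter.mp hv).1).symm)

end SimpleGraph

/-- In any spanning subgraph `G'` of `G` all of whose connected components are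
colorful, for every subset `S` of the vertices of color `c₀`, the number of
vertices of `S` isolated in `G'` is at least `|S| - |N'(S)|`, where `N'(S)` is
the set of `G`-neighbors of `S` with color different from `c₀`. -/
theorem stmt0 {V C : Type*} [Fintype V] (G : SimpleGraph V) (c : V → C) (c₀ : C)
    (G' : SimpleGraph V) (hsub : G' ≤ G)
    (hcolorful : ∀ u v : V, G'.Reachable u v → c u = c v → u = v)
    (S : Finset V) (hS : ∀ v ∈ S, c v = c₀) :
    S.card - (Finset.univ.filter (fun w => c w ≠ c₀ ∧ ∃ v ∈ S, G.Adj v w)).card ≤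
      (S.filter (fun v => ∀ w, ¬ G'.Adj v w)).card := by
  have hsplit := Finset.card_filter_add_card_filter_not (s := S) (fun v => ∀ w, ¬ G'.Adj v w)
  have hle := SimpleGraph.card_filter_not_isolated_le_of_colorful hsub hcolorful hS
  omega
end

section
/- Let G=(V,E) be a finite simple undirected graph with a vertex coloring c:V→C. For each color c₀ define s_{c₀} = max over subsets V'⊆V_{c₀} of (|V'| − |N'(V')|), where N'(V') is the set of neighbors of V' in G with color different from c₀. Then in every spanning subgraph G'=(V,E') with E'⊆E in which all connected components are colorful, the total number of isolated vertices is at least Σ_{c₀∈C} s_{c₀}. -/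
open scoped Classical

/-- Lower bound for the MSV problem: in every spanning subgraph `G'` of `G` with
all components colorful, the number of isolated vertices is at least
`∑_{c₀} s_{c₀}` where `s_{c₀} = max_{S ⊆ V_{c₀}} (|S| - |N'(S)|)`. -/
theorem stmt1 {V C : Type*} [Fintype V] [Fintype C] (G : SimpleGraph V) (c : V → C)
    (G' : SimpleGraph V) (hsub : G' ≤ G)
    (hcolorful : ∀ u v : V, G'.Reachable u v → c u = c v → u = v) :
    ∑ c₀ : C, (Finset.univ.filter (fun v => c v = c₀)).powerset.sup
        (fun S => S.card -
          (Finset.univ.filter (fun w => c w ≠ c₀ ∧ ∃ v ∈ S, G.Adj v w)).card)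
      ≤ (Finset.univ.filter (fun v : V => ∀ w, ¬ G'.Adj v w)).card := by
  classical
  rw [Finset.card_eq_sum_card_fiberwise (f := c) (t := Finset.univ)
    (fun x _ => Finset.mem_univ _)]
  refine Finset.sum_le_sum (fun c₀ _ => ?_)
  refine Finset.sup_le (fun S hS => ?_)
  rw [Finset.mem_powerset] at hS
  have hcS : ∀ v ∈ S, c v = c₀ := fun v hv => (Finset.mem_filter.mp (hS hv)).2
  set T := S.filter (fun v => ¬ ∀ w, ¬ G'.Adj v w) with hT
  have hsplit : (S.filter (fun v => ∀ w, ¬ G'.Adj v w)).card + T.card = S.card :=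
    Finset.card_filter_add_card_filter_not _
  let f : V → V := fun v => if h : ∃ w, G'.Adj v w then h.choose else v
  have hadj : ∀ v ∈ T, G'.Adj v (f v) := by
    intro v hv
    have h := (Finset.mem_filter.mp hv).2
    push_neg at h
    simp only [f]
    rw [dif_pos h]
    exact h.choose_spec
  have hmap : ∀ v ∈ T, f v ∈ Finset.univ.filter
      (fun w => c w ≠ c₀ ∧ ∃ v ∈ S, G.Adj v w) := by
    intro v hv
    have hvS := (Finset.mem_filter.mp hv).1
    have ha := hadj v hv
    refine Finset.mem_filter.mpr ⟨Finset.mem_univ _, ?_, v, hvS, hsub ha⟩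
    intro hcw
    have heq : v = f v := hcolorful v (f v) ha.reachable ((hcS v hvS).trans hcw.symm)
    exact ha.ne heq
  have hinj : Set.InjOn f T := by
    intro v₁ h₁ v₂ h₂ heq
    have a₁ := hadj v₁ h₁
    have a₂ := hadj v₂ h₂
    have hr : G'.Reachable v₁ v₂ := by
      refine a₁.reachable.trans ?_
      rw [heq]
      exact a₂.symm.reachable
    exact hcolorful v₁ v₂ hr (((hcS _ (Finset.mem_filter.mp h₁).1)).trans
      ((hcS _ (Finset.mem_filter.mp h₂).1)).symm)
  have hcard : T.card ≤
      (Finset.univ.filter (fun w => c w ≠ c₀ ∧ ∃ v ∈ S, G.Adj v w)).card :=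
    Finset.card_le_card_of_injOn f hmap hinj
  have hsubset : S.filter (fun v => ∀ w, ¬ G'.Adj v w) ⊆
      (Finset.univ.filter (fun v : V => ∀ w, ¬ G'.Adj v w)).filter (fun v => c v = c₀) := by
    intro v hv
    have h := Finset.mem_filter.mp hv
    exact Finset.mem_filter.mpr ⟨Finset.mem_filter.mpr ⟨Finset.mem_univ _, h.2⟩,
      hcS v h.1⟩
  have := Finset.card_le_card hsubset
  omega
end

section
/- Let G=(V,E) be a finite simple graph and let G'=(V',E') be constructed as follows: V' = V ∪ {u_v : (u,v) ∈ (V×V)∖E, u≠v} (where u_v and v_u are distinct new vertices for each non-adjacent unordered pair {u,v}), E' = E ∪ {(u, u_v) : (u,v) non-adjacent}, and the coloring gives each vertex of V a distinct color while u_v and v_u share a color unique to the pair {u,v}. If V can be partitioned into k sets each inducing a clique in G, then there exists a subset E''⊆E' such that the graph (V', E'∖E'') has at most k connected components, each of which is colorful. -/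
open scoped Classical

/-- Vertex set of the MCC reduction graph: base vertices plus, for each ordered
pair `(u,v)` of distinct non-adjacent vertices, an additional vertex `u_v`. -/
def mccVert {V : Type*} (G : SimpleGraph V) : Type _ :=
  V ⊕ {p : V × V // p.1 ≠ p.2 ∧ ¬ G.Adj p.1 p.2}

/-- Coloring of the MCC reduction graph: each base vertex gets its own color;
the additional vertices `u_v` and `v_u` share the color `s(u,v)`. -/
def mccColor {V : Type*} (G : SimpleGraph V) : mccVert G → V ⊕ Sym2 V
  | Sum.inl u => Sum.inl u
  | Sum.inr p => Sum.inr s(p.val.1, p.val.2)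

/-- Edges of the MCC reduction graph: the base edges of `G`, plus an edge from
each additional vertex `u_v` to the base vertex `u`. -/
def mccGraph {V : Type*} (G : SimpleGraph V) : SimpleGraph (mccVert G) :=
  SimpleGraph.fromRel (fun x y =>
    match x, y with
    | Sum.inl u, Sum.inl w => G.Adj u w
    | Sum.inl u, Sum.inr p => p.val.1 = u
    | _, _ => False)

/-!
Keep, inside `G'`, only the edges of `G` within a clique of the partition and all pendant
edges `u — u_v`. Every vertex `u_v` then lies in the component of `u`, and the components
are exactly the cliques of the partition. A component containing both `u_v` and `v_u` would
put `u` and `v` in the same clique, contradicting that they are non-adjacent.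
-/

namespace SimpleGraph

variable {V α : Type*} {H : SimpleGraph V}

theorem Reachable.apply_eq_of_adj {c : V → α} (hc : ∀ x y, H.Adj x y → c x = c y)
    {x y : V} (hxy : H.Reachable x y) : c x = c y := by
  obtain ⟨w⟩ := hxy
  induction w with
  | nil => rfl
  | cons hadj _ ih => exact (hc _ _ hadj).trans ih

theorem card_connectedComponent_le_of_reachable [Finite α] (c : V → α)
    (hc : ∀ x y, c x = c y → H.Reachable x y) :
    Nat.card H.ConnectedComponent ≤ Nat.card α := by
  refine Nat.card_le_card_of_injective (fun C => c C.out) fun C D hCD => ?_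
  rw [← C.out_eq, ← D.out_eq]
  exact ConnectedComponent.sound (hc _ _ hCD)

end SimpleGraph

section CliquePartition

variable {V ι : Type*} {G : SimpleGraph V}

def mccBase (G : SimpleGraph V) : mccVert G → V
  | Sum.inl u => u
  | Sum.inr p => p.val.1

def mccCliqueGraph (G : SimpleGraph V) (P : V → ι) : SimpleGraph (mccVert G) :=
  mccGraph G ⊓ SimpleGraph.fromRel fun x y => P (mccBase G x) = P (mccBase G y)

theorem mccCliqueGraph_le (P : V → ι) : mccCliqueGraph G P ≤ mccGraph G := inf_le_left

theorem mccCliqueGraph_reachable_base (P : V → ι) (x : mccVert G) :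
    (mccCliqueGraph G P).Reachable x (Sum.inl (mccBase G x)) := by
  rcases x with u | p
  · rfl
  · refine SimpleGraph.Adj.reachable ⟨?_, ?_⟩
    · exact (SimpleGraph.fromRel_adj _ _ _).mpr ⟨Sum.inr_ne_inl, Or.inr rfl⟩
    · exact (SimpleGraph.fromRel_adj _ _ _).mpr ⟨Sum.inr_ne_inl, Or.inl rfl⟩

theorem mccCliqueGraph_reachable_of_eq {P : V → ι}
    (hP : ∀ u v : V, P u = P v → u ≠ v → G.Adj u v) {x y : mccVert G}
    (hxy : P (mccBase G x) = P (mccBase G y)) : (mccCliqueGraph G P).Reachable x y := by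
  refine (mccCliqueGraph_reachable_base P x).trans
    (SimpleGraph.Reachable.trans ?_ (mccCliqueGraph_reachable_base P y).symm)
  by_cases hne : mccBase G x = mccBase G y
  · exact hne ▸ SimpleGraph.Reachable.rfl
  · refine SimpleGraph.Adj.reachable ⟨?_, ?_⟩
    · exact (SimpleGraph.fromRel_adj _ _ _).mpr
        ⟨Sum.inl_injective.ne hne, Or.inl (hP _ _ hxy hne)⟩
    · exact (SimpleGraph.fromRel_adj _ _ _).mpr ⟨Sum.inl_injective.ne hne, Or.inl hxy⟩

theorem mccCliqueGraph_reachable_iff {P : V → ι}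
    (hP : ∀ u v : V, P u = P v → u ≠ v → G.Adj u v) {x y : mccVert G} :
    (mccCliqueGraph G P).Reachable x y ↔ P (mccBase G x) = P (mccBase G y) := by
  refine ⟨fun hxy => hxy.apply_eq_of_adj (c := fun z => P (mccBase G z)) fun a b hab => ?_,
    mccCliqueGraph_reachable_of_eq hP⟩
  rcases ((SimpleGraph.fromRel_adj _ _ _).mp hab.2).2 with h | h
  exacts [h, h.symm]

theorem eq_of_mccCliqueGraph_reachable_of_mccColor_eq {P : V → ι}
    (hP : ∀ u v : V, P u = P v → u ≠ v → G.Adj u v) {x y : mccVert G}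
    (hxy : (mccCliqueGraph G P).Reachable x y) (hcol : mccColor G x = mccColor G y) :
    x = y := by
  rw [mccCliqueGraph_reachable_iff hP] at hxy
  rcases x with u | ⟨⟨u, v⟩, huv, hadj⟩ <;> rcases y with w | ⟨⟨w, z⟩, _, _⟩ <;>
    simp only [mccColor, Sum.inl.injEq, Sum.inr.injEq, reduceCtorEq, Sym2.eq_iff] at hcol
  · rw [hcol]
  · rcases hcol with ⟨rfl, rfl⟩ | ⟨rfl, rfl⟩
    · rfl
    · exact (hadj (hP u v hxy huv)).elim

end CliquePartition

theorem stmt6_general {V : Type*} (G : SimpleGraph V) (k : ℕ)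
    (P : V → Fin k) (hP : ∀ u v : V, P u = P v → u ≠ v → G.Adj u v) :
    ∃ H : SimpleGraph (mccVert G), H ≤ mccGraph G ∧
      (∀ x y : mccVert G, H.Reachable x y → mccColor G x = mccColor G y → x = y) ∧
      Nat.card H.ConnectedComponent ≤ k := by
  refine ⟨mccCliqueGraph G P, mccCliqueGraph_le P,
    fun x y => eq_of_mccCliqueGraph_reachable_of_mccColor_eq hP, ?_⟩
  calc Nat.card (mccCliqueGraph G P).ConnectedComponent ≤ Nat.card (Fin k) :=
        SimpleGraph.card_connectedComponent_le_of_reachable _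
          fun _ _ => mccCliqueGraph_reachable_of_eq hP
    _ = k := Nat.card_fin k

/-- If `G` can be partitioned into `k` cliques, then some subgraph of the MCC
reduction graph (obtained by deleting edges) has all components colorful and at
most `k` connected components. -/
theorem stmt6 {V : Type*} [Fintype V] [DecidableEq V] (G : SimpleGraph V) (k : ℕ)
    (P : V → Fin k) (hP : ∀ u v : V, P u = P v → u ≠ v → G.Adj u v) :
    ∃ H : SimpleGraph (mccVert G), H ≤ mccGraph G ∧
      (∀ x y : mccVert G, H.Reachable x y → mccColor G x = mccColor G y → x = y) ∧
      Nat.card H.ConnectedComponent ≤ k :=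
  stmt6_general G k P hP
end

section
/- Let G'=(V,E') be a graph in which every connected component is colorful with respect to a coloring c, and let p = (v₀, v₁, …, v_{2k+1}) be an alternating path in a supergraph G=(V,E) of G': odd-indexed edges (v_{2i}, v_{2i+1}) are in E∖E' and even-indexed edges (v_{2i+1}, v_{2i+2}) are in E'. Let G'' be obtained from G' by removing the path's edges that are in E' and adding the path's edges not in E'. Then every vertex not an endpoint of p has the same degree in G'' as in G', the degree of v₀ increases by one, and the degree of v_{2k+1} increases by one. -/
/-!
Applying the path replaces `G'` by its symmetric difference with the path graph embedded along
`p`, so each neighbourhood changes by its symmetric difference with the path-neighbourhood.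
An interior vertex has two path-neighbours, and since the path alternates exactly one of them is
a `G'`-neighbour: it loses one neighbour and gains one. An endpoint has a single path-neighbour,
reached by an edge outside `G'`, which it gains. Vertices off the path are untouched.
-/

open scoped Classical

open Finset
open scoped symmDiff

namespace Finset

variable {α : Type*} [DecidableEq α] {s : Finset α} {a b : α}

lemma card_symmDiff_singleton_of_notMem (hb : b ∉ s) : #(s ∆ {b}) = #s + 1 := by
  rw [symmDiff_eq_union (disjoint_singleton_right.2 hb), card_union_of_disjoint
    (disjoint_singleton_right.2 hb), card_singleton]

lemma card_symmDiff_pair_of_mem_of_notMem (ha : a ∈ s) (hb : b ∉ s) : #(s ∆ {a, b}) = #s := by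
  have : s ∆ {a, b} = insert b (s.erase a) := by
    ext x
    simp only [mem_symmDiff, mem_insert, mem_singleton, mem_erase]
    grind
  rw [this, card_insert_of_notMem (fun h => hb (mem_of_mem_erase h)), card_erase_add_one ha]

end Finset

namespace SimpleGraph

variable {V W : Type*}

lemma fromRel_xor_eq_symmDiff (G : SimpleGraph V) {r : V → V → Prop}
    (hr : ∀ x y, r x y → r y x) :
    fromRel (fun x y => Xor' (G.Adj x y) (r x y)) = G ∆ fromRel r := by
  ext x y
  simp only [fromRel_adj, symmDiff_def, sup_adj, sdiff_adj, Xor']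
  grind [G.ne_of_adj, G.adj_symm]

lemma map_pathGraph_eq_fromRel {n : ℕ} {p : Fin (n + 1) → V} (hp : p.Injective) :
    (pathGraph (n + 1)).map p = fromRel fun x y => ∃ i : Fin n,
      (x = p i.castSucc ∧ y = p i.succ) ∨ (y = p i.castSucc ∧ x = p i.succ) := by
  have hstep (i : Fin n) : (pathGraph (n + 1)).Adj i.castSucc i.succ := by simp [pathGraph_adj]
  ext x y
  simp only [map_adj', fromRel_adj]
  constructor
  · rintro ⟨-, a, b, hab, rfl, rfl⟩
    refine ⟨hp.ne hab.ne, Or.inl ?_⟩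
    rcases pathGraph_adj.1 hab with hab | hab
    · exact ⟨⟨a, by omega⟩, Or.inl ⟨rfl, congrArg p (Fin.ext hab.symm)⟩⟩
    · exact ⟨⟨b, by omega⟩, Or.inr ⟨rfl, congrArg p (Fin.ext hab.symm)⟩⟩
  · rintro ⟨hne, ⟨i, ⟨rfl, rfl⟩ | ⟨rfl, rfl⟩⟩ | ⟨i, ⟨rfl, rfl⟩ | ⟨rfl, rfl⟩⟩⟩
    exacts [⟨hne, _, _, hstep i, rfl, rfl⟩, ⟨hne, _, _, (hstep i).symm, rfl, rfl⟩,
      ⟨hne, _, _, (hstep i).symm, rfl, rfl⟩, ⟨hne, _, _, hstep i, rfl, rfl⟩]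

lemma neighborFinset_symmDiff (G H : SimpleGraph V) (v : V) [Fintype ((G ∆ H).neighborSet v)]
    [Fintype (G.neighborSet v)] [Fintype (H.neighborSet v)] :
    (G ∆ H).neighborFinset v = G.neighborFinset v ∆ H.neighborFinset v := by
  ext w
  rw [mem_neighborFinset, Finset.mem_symmDiff, mem_neighborFinset, mem_neighborFinset]
  simp only [symmDiff_def, sup_adj, sdiff_adj]

lemma neighborFinset_map_apply (G : SimpleGraph V) {f : V → W} (hf : f.Injective) (v : V)
    [Fintype ((G.map f).neighborSet (f v))] [Fintype (G.neighborSet v)] :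
    (G.map f).neighborFinset (f v) = (G.neighborFinset v).map ⟨f, hf⟩ := by
  rw [← coe_inj, coe_neighborFinset, coe_map, coe_neighborFinset]
  exact neighborSet_map (G := G) ⟨f, hf⟩ v

lemma neighborFinset_map_of_notMem_range (G : SimpleGraph V) (f : V → W) {w : W}
    (hw : w ∉ Set.range f) [Fintype ((G.map f).neighborSet w)] :
    (G.map f).neighborFinset w = ∅ := by
  ext x
  simp only [mem_neighborFinset, map_adj', notMem_empty, iff_false]
  rintro ⟨-, a, b, -, rfl, -⟩
  exact hw ⟨a, rfl⟩

lemma neighborFinset_pathGraph_zero (n : ℕ) : (pathGraph (n + 2)).neighborFinset 0 = {1} := by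
  ext j
  simp only [mem_neighborFinset, pathGraph_adj, mem_singleton, Fin.ext_iff, Fin.val_zero,
    Fin.val_one]
  omega

lemma neighborFinset_pathGraph_last (n : ℕ) :
    (pathGraph (n + 2)).neighborFinset (Fin.last (n + 1)) = {(Fin.last n).castSucc} := by
  ext j
  simp only [mem_neighborFinset, pathGraph_adj, mem_singleton, Fin.ext_iff, Fin.val_last,
    Fin.val_castSucc]
  omega

lemma neighborFinset_pathGraph_castSucc_succ {n : ℕ} (i : Fin n) :
    (pathGraph (n + 2)).neighborFinset i.castSucc.succ = {i.castSucc.castSucc, i.succ.succ} := by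
  ext j
  simp only [mem_neighborFinset, pathGraph_adj, mem_insert, mem_singleton, Fin.ext_iff,
    Fin.val_castSucc, Fin.val_succ]
  omega

variable [Fintype W]

lemma degree_symmDiff_map_apply [Fintype V] (G : SimpleGraph W) (H : SimpleGraph V) {f : V → W}
    (hf : f.Injective) (v : V) :
    (G ∆ H.map f).degree (f v) =
      #(G.neighborFinset (f v) ∆ (H.neighborFinset v).map ⟨f, hf⟩) := by
  rw [← card_neighborFinset_eq_degree, neighborFinset_symmDiff, neighborFinset_map_apply]

lemma degree_symmDiff_map_of_notMem_range (G : SimpleGraph W) (H : SimpleGraph V) {f : V → W}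
    {w : W} (hw : w ∉ Set.range f) : (G ∆ H.map f).degree w = G.degree w := by
  rw [← card_neighborFinset_eq_degree, neighborFinset_symmDiff,
    neighborFinset_map_of_notMem_range H f hw, ← bot_eq_empty, symmDiff_bot,
    card_neighborFinset_eq_degree]

variable {G : SimpleGraph W} {n : ℕ} {p : Fin (n + 2) → W}

lemma degree_symmDiff_map_pathGraph_zero (hp : p.Injective) (h : ¬ G.Adj (p 0) (p 1)) :
    (G ∆ (pathGraph (n + 2)).map p).degree (p 0) = G.degree (p 0) + 1 := by
  rw [degree_symmDiff_map_apply _ _ hp, neighborFinset_pathGraph_zero, map_singleton,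
    card_symmDiff_singleton_of_notMem (by simpa using h), card_neighborFinset_eq_degree]

lemma degree_symmDiff_map_pathGraph_last (hp : p.Injective)
    (h : ¬ G.Adj (p (Fin.last (n + 1))) (p (Fin.last n).castSucc)) :
    (G ∆ (pathGraph (n + 2)).map p).degree (p (Fin.last (n + 1))) =
      G.degree (p (Fin.last (n + 1))) + 1 := by
  rw [degree_symmDiff_map_apply _ _ hp, neighborFinset_pathGraph_last, map_singleton,
    card_symmDiff_singleton_of_notMem (by simpa using h), card_neighborFinset_eq_degree]

lemma degree_symmDiff_map_pathGraph_castSucc_succ (hp : p.Injective) (i : Fin n)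
    (h : G.Adj (p i.castSucc.succ) (p i.castSucc.castSucc) ↔
      ¬ G.Adj (p i.castSucc.succ) (p i.succ.succ)) :
    (G ∆ (pathGraph (n + 2)).map p).degree (p i.castSucc.succ) =
      G.degree (p i.castSucc.succ) := by
  rw [degree_symmDiff_map_apply _ _ hp, neighborFinset_pathGraph_castSucc_succ, map_insert,
    map_singleton, ← card_neighborFinset_eq_degree]
  by_cases hadj : G.Adj (p i.castSucc.succ) (p i.castSucc.castSucc)
  · exact card_symmDiff_pair_of_mem_of_notMem (by simpa using hadj) (by simpa using h.1 hadj)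
  · rw [pair_comm]
    exact card_symmDiff_pair_of_mem_of_notMem (by simpa [hadj] using h) (by simpa using hadj)

end SimpleGraph

open SimpleGraph

theorem stmt13_general {V : Type*} [Fintype V] (G G' : SimpleGraph V)
    (k : ℕ) (p : Fin (2*k+1+1) → V) (hinj : Function.Injective p)
    (halt : ∀ i : Fin (2*k+1),
      if (i : ℕ) % 2 = 0
      then G.Adj (p i.castSucc) (p i.succ) ∧ ¬ G'.Adj (p i.castSucc) (p i.succ)
      else G'.Adj (p i.castSucc) (p i.succ)) :
    ∀ pathEdge : V → V → Prop,
      (pathEdge = fun x y => ∃ i : Fin (2*k+1),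
        (x = p i.castSucc ∧ y = p i.succ) ∨ (y = p i.castSucc ∧ x = p i.succ)) →
    ∀ G'' : SimpleGraph V,
      (G'' = SimpleGraph.fromRel (fun x y => Xor' (G'.Adj x y) (pathEdge x y))) →
    (∀ x : V, x ≠ p 0 → x ≠ p (Fin.last (2*k+1)) → G''.degree x = G'.degree x) ∧
      G''.degree (p 0) = G'.degree (p 0) + 1 ∧
      G''.degree (p (Fin.last (2*k+1))) = G'.degree (p (Fin.last (2*k+1))) + 1 := by
  rintro _ rfl _ rfl
  have hparity (i : Fin (2*k+1)) : G'.Adj (p i.castSucc) (p i.succ) ↔ (i : ℕ) % 2 = 1 := by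
    have := halt i
    split_ifs at this with h
    · simp only [this.2, false_iff]; omega
    · simp only [this, true_iff]; omega
  rw [fromRel_xor_eq_symmDiff G' fun x y ⟨i, h⟩ => ⟨i, h.symm⟩, ← map_pathGraph_eq_fromRel hinj]
  refine ⟨fun x hx0 hxl => ?_, degree_symmDiff_map_pathGraph_zero hinj ?_,
    degree_symmDiff_map_pathGraph_last hinj ?_⟩
  · by_cases hx : x ∈ Set.range p
    · obtain ⟨j, rfl⟩ := hx
      obtain ⟨j, rfl⟩ := Fin.exists_castSucc_eq.2 fun h : j = _ => hxl (by rw [h])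
      obtain ⟨i, rfl⟩ := Fin.exists_succ_eq.2 fun h : j = 0 => hx0 (by rw [h]; rfl)
      refine degree_symmDiff_map_pathGraph_castSucc_succ hinj i ?_
      rw [G'.adj_comm, hparity i.castSucc, Fin.succ_castSucc, hparity i.succ]
      simp only [Fin.val_castSucc, Fin.val_succ]
      omega
    · exact degree_symmDiff_map_of_notMem_range G' _ hx
  · exact (hparity 0).not.2 (by simp)
  · rw [G'.adj_comm]
    exact (hparity (Fin.last _)).not.2 (by simp)

/-- Applying an alternating path of odd length (edges alternating between
`E ∖ E'` and `E'`, starting and ending with edges of `E ∖ E'`) to `G'` keeps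
the degree of every internal vertex unchanged and increases the degrees of both
endpoints by one. -/
theorem stmt13 {V C : Type*} [Fintype V] (G G' : SimpleGraph V) (hsub : G' ≤ G)
    (c : V → C) (hcolorful : ∀ u v : V, G'.Reachable u v → c u = c v → u = v)
    (k : ℕ) (p : Fin (2*k+1+1) → V) (hinj : Function.Injective p)
    (halt : ∀ i : Fin (2*k+1),
      if (i : ℕ) % 2 = 0
      then G.Adj (p i.castSucc) (p i.succ) ∧ ¬ G'.Adj (p i.castSucc) (p i.succ)
      else G'.Adj (p i.castSucc) (p i.succ)) :
    ∀ pathEdge : V → V → Prop,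
      (pathEdge = fun x y => ∃ i : Fin (2*k+1),
        (x = p i.castSucc ∧ y = p i.succ) ∨ (y = p i.castSucc ∧ x = p i.succ)) →
    ∀ G'' : SimpleGraph V,
      (G'' = SimpleGraph.fromRel (fun x y => Xor' (G'.Adj x y) (pathEdge x y))) →
    (∀ x : V, x ≠ p 0 → x ≠ p (Fin.last (2*k+1)) → G''.degree x = G'.degree x) ∧
      G''.degree (p 0) = G'.degree (p 0) + 1 ∧
      G''.degree (p (Fin.last (2*k+1))) = G'.degree (p (Fin.last (2*k+1))) + 1 :=
  stmt13_general G G' k p hinj halt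
end

section
/- Let φ be a satisfiable 3-CNF formula with m clauses. In the MEC reduction graph G built from φ (4 colors a,b,c,v; one c-colored vertex per clause; for each variable x with n_x literal occurrences a cycle of length 4n_x alternating colors a,v,b,v; clause vertices attached to distinct literal vertices), there exists a spanning subgraph G'' in which every connected component is colorful, with exactly m components of size 4, 2m components of size 3, and 3m singleton components, so that the transitive closure of G'' has exactly 12m edges. -/
open scoped Classical

/-- Vertex set of the MEC reduction graph: one vertex per clause (color `c`),
and for each variable `x` with `n x` literal occurrences, vertices
`a^x_i, v^x_i, b^x_i, w^x_i` (positions `0,1,2,3`) for `i : Fin (n x)`. -/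
abbrev MecVert (X : Type*) (m : ℕ) (n : X → ℕ) : Type _ :=
  Fin m ⊕ (Σ x : X, Fin (n x) × Fin 4)

/-- Colors `0 = a`, `1 = v`, `2 = b`, `3 = c`: clause vertices get color `c`;
positions `0,1,2,3` on a variable cycle get colors `a, v, b, v`. -/
def mecColor {X : Type*} {m : ℕ} {n : X → ℕ} : MecVert X m n → Fin 4
  | Sum.inl _ => 3
  | Sum.inr ⟨_, _, j⟩ => if j = 0 then 0 else if j = 2 then 2 else 1

/-- Edge relation of the MEC reduction graph: for each variable `x` a cycle
`a^x_i – v^x_i – b^x_i – w^x_i – a^x_{i+1 (mod n x)}`, and each clause vertex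
joined to the vertex `v^x_i` (resp. `w^x_i`) corresponding, via the occurrence
enumeration `e`, to each of its positive (resp. negative) literal occurrences. -/
def mecRel {X : Type*} [DecidableEq X] (m : ℕ) (n : X → ℕ)
    (lit : Fin m → Fin 3 → X × Bool)
    (e : ∀ x : X, {q : Fin m × Fin 3 // (lit q.1 q.2).1 = x} ≃ Fin (n x)) :
    MecVert X m n → MecVert X m n → Prop
  | Sum.inr ⟨x, i, j⟩, Sum.inr ⟨x', i', j'⟩ =>
      x = x' ∧ ((HEq i i' ∧ ((j = 0 ∧ j' = 1) ∨ (j = 1 ∧ j' = 2) ∨ (j = 2 ∧ j' = 3))) ∨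
        (j = 3 ∧ j' = 0 ∧
          HEq (Fin.mk ((i.val + 1) % n x)
            (Nat.mod_lt _ (Nat.lt_of_le_of_lt (Nat.zero_le _) i.isLt))) i'))
  | Sum.inl cj, Sum.inr ⟨x, i, j⟩ =>
      ∃ (s : Fin 3) (h : (lit cj s).1 = x),
        e x ⟨(cj, s), h⟩ = i ∧ j = (if (lit cj s).2 then 1 else 3)
  | _, _ => False

/-- The MEC reduction graph built from a 3-CNF formula. -/
def mecGraph {X : Type*} [DecidableEq X] (m : ℕ) (n : X → ℕ)
    (lit : Fin m → Fin 3 → X × Bool)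
    (e : ∀ x : X, {q : Fin m × Fin 3 // (lit q.1 q.2).1 = x} ≃ Fin (n x)) :
    SimpleGraph (MecVert X m n) :=
  SimpleGraph.fromRel (mecRel m n lit e)

/-!
Fix a satisfying assignment `f` and in every clause `j` a literal `s j` that `f` makes true. Cut
each variable cycle into `n x` paths `b^x_i` – `v^x_i` – `a^x_i` (if `f x`) or
`b^x_i` – `w^x_i` – `a^x_{i+1}` (if not) plus the `n x` leftover vertices. The middle vertices of
these paths are exactly the literal vertices of the literals that `f` makes true, so every clause
vertex `c_j` can be attached to the path through the literal vertex of `s j`. All blocks are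
colourful; there are `m` blocks of size 4, `2m` of size 3 and `3m` singletons, hence
`12 m + 6 (2 m) = 24 m` ordered pairs of distinct vertices in a common block.
-/

lemma Finset.sum_comp_eq_sum_card_mul {α : Type*} [Fintype α] (h : α → ℕ) (g : ℕ → ℕ)
    (S : Finset ℕ) (hS : ∀ a, h a ∈ S) :
    ∑ a, g (h a) = ∑ k ∈ S, Nat.card {a // h a = k} * g k := by
  rw [← Finset.sum_fiberwise_of_maps_to' (t := S) (fun a _ => hS a)]
  refine Finset.sum_congr rfl fun k _ => ?_
  rw [Finset.sum_const, smul_eq_mul, Nat.card_eq_fintype_card, Fintype.card_subtype]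

namespace SimpleGraph

variable {V ι : Type*}

def withinFibers (G : SimpleGraph V) (φ : V → ι) : SimpleGraph V where
  Adj u v := G.Adj u v ∧ φ u = φ v
  symm := ⟨fun _ _ h => ⟨h.1.symm, h.2.symm⟩⟩
  loopless := ⟨fun _ h => G.irrefl h.1⟩

variable {G : SimpleGraph V} {φ : V → ι}

lemma withinFibers_le : G.withinFibers φ ≤ G := fun _ _ h => h.1

lemma Reachable.eq_of_withinFibers {u v : V} (h : (G.withinFibers φ).Reachable u v) :
    φ u = φ v := by
  obtain ⟨p⟩ := h
  induction p with
  | nil => rfl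
  | cons hadj _ ih => exact hadj.2.trans ih

lemma reachable_withinFibers_iff {hub : ι → V}
    (hhub : ∀ u, (G.withinFibers φ).Reachable u (hub (φ u))) {u v : V} :
    (G.withinFibers φ).Reachable u v ↔ φ u = φ v :=
  ⟨Reachable.eq_of_withinFibers, fun h => (hhub u).trans (h ▸ (hhub v).symm)⟩

variable {H : SimpleGraph V}

noncomputable def connectedComponentEquivOfReachableIff
    (hφ : ∀ u v, H.Reachable u v ↔ φ u = φ v) (hsurj : Function.Surjective φ) :
    H.ConnectedComponent ≃ ι where
  toFun := ConnectedComponent.lift φ fun _ _ p _ => (hφ _ _).1 ⟨p⟩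
  invFun c := H.connectedComponentMk (Function.surjInv hsurj c)
  left_inv := ConnectedComponent.ind fun _ =>
    ConnectedComponent.sound <| (hφ _ _).2 (Function.surjInv_eq hsurj _)
  right_inv := Function.surjInv_eq hsurj

lemma card_supp_eq_card_fiber (hφ : ∀ u v, H.Reachable u v ↔ φ u = φ v)
    (hsurj : Function.Surjective φ) (K : H.ConnectedComponent) :
    Nat.card K.supp = Nat.card {u // φ u = connectedComponentEquivOfReachableIff hφ hsurj K} := by
  induction K using ConnectedComponent.ind with
  | h u =>
    congr! 2
    ext v
    exact ConnectedComponent.eq.trans (hφ v u)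

lemma card_connectedComponent_card_supp_eq (hφ : ∀ u v, H.Reachable u v ↔ φ u = φ v)
    (hsurj : Function.Surjective φ) (k : ℕ) :
    Nat.card {K : H.ConnectedComponent // Nat.card K.supp = k} =
      Nat.card {c : ι // Nat.card {u // φ u = c} = k} :=
  Nat.card_congr <| (connectedComponentEquivOfReachableIff hφ hsurj).subtypeEquiv fun K => by
    rw [card_supp_eq_card_fiber hφ hsurj]

lemma card_reachable_offDiag [Fintype V] [Fintype H.ConnectedComponent] :
    Nat.card {p : V × V // p.1 ≠ p.2 ∧ H.Reachable p.1 p.2} =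
      ∑ K : H.ConnectedComponent, Nat.card K.supp * (Nat.card K.supp - 1) := by
  rw [Nat.card_eq_fintype_card, Fintype.card_subtype,
    Finset.card_eq_sum_card_fiberwise (f := fun p => H.connectedComponentMk p.1)
      (t := Finset.univ) (fun _ _ => Finset.mem_univ _)]
  refine Finset.sum_congr rfl fun K _ => ?_
  have : ({p ∈ Finset.univ | p.1 ≠ p.2 ∧ H.Reachable p.1 p.2} : Finset (V × V)).filter
      (fun p => H.connectedComponentMk p.1 = K) = K.supp.toFinset.offDiag := by
    ext ⟨u, v⟩
    simp only [Finset.mem_filter, Finset.mem_univ, true_and, Finset.mem_offDiag,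
      Set.mem_toFinset, ConnectedComponent.mem_supp_iff]
    constructor
    · rintro ⟨⟨hne, huv⟩, rfl⟩
      exact ⟨rfl, (ConnectedComponent.eq.2 huv).symm, hne⟩
    · rintro ⟨rfl, hv, hne⟩
      exact ⟨⟨hne, ConnectedComponent.eq.1 hv.symm⟩, rfl⟩
  rw [this, Finset.offDiag_card, Nat.card_eq_card_toFinset, Nat.mul_sub_one]

lemma card_reachable_offDiag_eq_sum_card_mul [Fintype V] [Fintype H.ConnectedComponent]
    (S : Finset ℕ) (hS : ∀ K : H.ConnectedComponent, Nat.card K.supp ∈ S) :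
    Nat.card {p : V × V // p.1 ≠ p.2 ∧ H.Reachable p.1 p.2} =
      ∑ k ∈ S, Nat.card {K : H.ConnectedComponent // Nat.card K.supp = k} * (k * (k - 1)) := by
  rw [card_reachable_offDiag]
  exact Finset.sum_comp_eq_sum_card_mul (fun K : H.ConnectedComponent => Nat.card K.supp)
    (fun k => k * (k - 1)) S hS

end SimpleGraph

namespace MecReduction

variable {X : Type*} {m : ℕ} {n : X → ℕ}

abbrev Occ (X : Type*) (n : X → ℕ) : Type _ := Σ x : X, Fin (n x)

def cyc (x : X) (i : Fin (n x)) (p : Fin 4) : MecVert X m n := Sum.inr ⟨x, i, p⟩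

lemma val_finRotate {k : ℕ} (i : Fin k) : (finRotate k i).val = (i.val + 1) % k := by
  have := i.neZero
  rw [finRotate_apply, Fin.val_add, Fin.val_one', Nat.add_mod_mod]

lemma card_occ (lit : Fin m → Fin 3 → X × Bool)
    (e : ∀ x : X, {q : Fin m × Fin 3 // (lit q.1 q.2).1 = x} ≃ Fin (n x)) :
    Nat.card (Occ X n) = 3 * m := by
  rw [Nat.card_congr ((Equiv.sigmaCongrRight fun x => (e x).symm).trans
    (Equiv.sigmaFiberEquiv fun q : Fin m × Fin 3 => (lit q.1 q.2).1))]
  simp [mul_comm]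

variable (lit : Fin m → Fin 3 → X × Bool)
  (e : ∀ x : X, {q : Fin m × Fin 3 // (lit q.1 q.2).1 = x} ≃ Fin (n x))

section Edges

variable [DecidableEq X] (x : X) (i : Fin (n x))

lemma mecGraph_adj_a_v : (mecGraph m n lit e).Adj (cyc x i 0) (cyc x i 1) := by
  simp [mecGraph, mecRel, cyc]

lemma mecGraph_adj_v_b : (mecGraph m n lit e).Adj (cyc x i 1) (cyc x i 2) := by
  simp [mecGraph, mecRel, cyc]

lemma mecGraph_adj_b_w : (mecGraph m n lit e).Adj (cyc x i 2) (cyc x i 3) := by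
  simp [mecGraph, mecRel, cyc]

lemma mecGraph_adj_w_a : (mecGraph m n lit e).Adj (cyc x i 3) (cyc x (finRotate _ i) 0) := by
  simp [mecGraph, mecRel, cyc, Fin.ext_iff, val_finRotate, -finRotate_apply]

lemma mecGraph_adj_clause (j : Fin m) (k : Fin 3) :
    (mecGraph m n lit e).Adj (Sum.inl j)
      (cyc (lit j k).1 (e _ ⟨(j, k), rfl⟩) (if (lit j k).2 then 1 else 3)) := by
  simp only [mecGraph, SimpleGraph.fromRel_adj]
  exact ⟨Sum.inl_ne_inr, Or.inl ⟨k, rfl, rfl, rfl⟩⟩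

end Edges

variable (s : Fin m → Fin 3)

def chosenOcc (j : Fin m) : Occ X n := ⟨(lit j (s j)).1, e _ ⟨(j, s j), rfl⟩⟩

def clauseOf (t : Occ X n) : Fin m := ((e t.1).symm t.2).1.1

@[simp]
lemma clauseOf_chosenOcc (j : Fin m) : clauseOf lit e (chosenOcc lit e s j) = j := by
  rw [clauseOf, chosenOcc, Equiv.symm_apply_apply]

lemma chosenOcc_injective : Function.Injective (chosenOcc lit e s) :=
  Function.LeftInverse.injective (clauseOf_chosenOcc lit e s)

lemma card_range_chosenOcc : Nat.card (Set.range (chosenOcc lit e s)) = m := by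
  rw [Nat.card_range_of_injective (chosenOcc_injective lit e s), Nat.card_fin]

lemma mem_range_chosenOcc_iff {t : Occ X n} :
    t ∈ Set.range (chosenOcc lit e s) ↔ chosenOcc lit e s (clauseOf lit e t) = t := by
  constructor
  · rintro ⟨j, rfl⟩
    rw [clauseOf_chosenOcc]
  · exact fun h => ⟨_, h⟩

variable (f : X → Bool)

/-- The block of a vertex: `inl t` is the path of the occurrence `t = ⟨x, i⟩` (indexed by its
`b`-vertex, so that `a^x_i` belongs to `inl ⟨x, i - 1⟩` when `f x` is false) together with the
clause vertex whose chosen literal is `t`; `inr t` is the leftover vertex `w^x_i` or `v^x_i`. -/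
def label : MecVert X m n → Occ X n ⊕ Occ X n
  | Sum.inl j => Sum.inl (chosenOcc lit e s j)
  | Sum.inr ⟨x, i, p⟩ =>
    if p = 0 then Sum.inl ⟨x, if f x then i else (finRotate _).symm i⟩
    else if p = 1 then (if f x then Sum.inl ⟨x, i⟩ else Sum.inr ⟨x, i⟩)
    else if p = 2 then Sum.inl ⟨x, i⟩
    else (if f x then Sum.inr ⟨x, i⟩ else Sum.inl ⟨x, i⟩)

/-- The vertex of colour `k` in block `c`, whenever `c` has one; otherwise a vertex outside `c`. -/
def vertexOf : Occ X n ⊕ Occ X n → Fin 4 → MecVert X m n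
  | Sum.inl ⟨x, i⟩, k =>
    if k = 0 then cyc x (if f x then i else finRotate _ i) 0
    else if k = 1 then cyc x i (if f x then 1 else 3)
    else if k = 2 then cyc x i 2
    else Sum.inl (clauseOf lit e ⟨x, i⟩)
  | Sum.inr ⟨x, i⟩, k => if k = 1 then cyc x i (if f x then 3 else 1) else cyc x i 2

lemma vertexOf_mecColor {u : MecVert X m n} {c : Occ X n ⊕ Occ X n}
    (h : label lit e s f u = c) : vertexOf lit e f c (mecColor u) = u := by
  subst h
  rcases u with j | ⟨x, i, p⟩
  · simp [label, vertexOf, mecColor]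
  · fin_cases p <;> cases hx : f x <;>
      simp [label, vertexOf, mecColor, cyc, hx, -finRotate_apply, -finRotate_symm_apply]

lemma mecColor_vertexOf {c : Occ X n ⊕ Occ X n} {k : Fin 4}
    (h : label lit e s f (vertexOf lit e f c k) = c) : mecColor (vertexOf lit e f c k) = k := by
  rcases c with ⟨x, i⟩ | ⟨x, i⟩
  · fin_cases k <;> cases hx : f x <;> simp [vertexOf, mecColor, cyc, hx]
  · fin_cases k <;> cases hx : f x <;> simp_all [label, vertexOf, mecColor, cyc]

lemma eq_of_label_eq_of_mecColor_eq {u v : MecVert X m n}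
    (hl : label lit e s f u = label lit e s f v) (hc : mecColor u = mecColor v) : u = v := by
  rw [← vertexOf_mecColor lit e s f hl, hc, vertexOf_mecColor lit e s f rfl]

def fiberEquivColors (c : Occ X n ⊕ Occ X n) :
    {u // label lit e s f u = c} ≃ {k : Fin 4 // label lit e s f (vertexOf lit e f c k) = c} where
  toFun u := ⟨mecColor u.1, by rw [vertexOf_mecColor lit e s f u.2, u.2]⟩
  invFun k := ⟨vertexOf lit e f c k, k.2⟩
  left_inv u := Subtype.ext (vertexOf_mecColor lit e s f u.2)
  right_inv k := Subtype.ext (mecColor_vertexOf lit e s f k.2)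

lemma card_fiber_inl (t : Occ X n) :
    Nat.card {u // label lit e s f u = Sum.inl t} =
      if t ∈ Set.range (chosenOcc lit e s) then 4 else 3 := by
  rw [Nat.card_congr (fiberEquivColors lit e s f _)]
  have hcolors : ∀ k : Fin 4, label lit e s f (vertexOf lit e f (Sum.inl t) k) = Sum.inl t ↔
      (k = 3 → t ∈ Set.range (chosenOcc lit e s)) := by
    obtain ⟨x, i⟩ := t
    intro k
    rw [mem_range_chosenOcc_iff]
    fin_cases k <;> cases hx : f x <;>
      simp [label, vertexOf, cyc, hx, -finRotate_apply, -finRotate_symm_apply]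
  simp_rw [hcolors]
  by_cases ht : t ∈ Set.range (chosenOcc lit e s)
  · simp [ht]
  · simp [ht, Nat.card_eq_fintype_card, Fintype.card_subtype]
    decide

lemma card_fiber_inr (t : Occ X n) : Nat.card {u // label lit e s f u = Sum.inr t} = 1 := by
  rw [Nat.card_congr (fiberEquivColors lit e s f _)]
  have hcolors : ∀ k : Fin 4, label lit e s f (vertexOf lit e f (Sum.inr t) k) = Sum.inr t ↔
      k = 1 := by
    obtain ⟨x, i⟩ := t
    intro k
    fin_cases k <;> cases hx : f x <;> simp [label, vertexOf, cyc, hx]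
  simp_rw [hcolors]
  exact Nat.card_unique

lemma label_vertexOf_one (c : Occ X n ⊕ Occ X n) :
    label lit e s f (vertexOf lit e f c 1) = c := by
  rcases c with ⟨x, i⟩ | ⟨x, i⟩ <;> cases hx : f x <;> simp [label, vertexOf, cyc, hx]

lemma card_fiber_mem (c : Occ X n ⊕ Occ X n) :
    Nat.card {u // label lit e s f u = c} ∈ ({4, 3, 1} : Finset ℕ) := by
  rcases c with t | t
  · rw [card_fiber_inl]
    split_ifs <;> simp
  · rw [card_fiber_inr]
    simp

section Reachability

variable [DecidableEq X]

/-- Each block is a star centred at its vertex of colour `v`. -/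
lemma reachable_vertexOf_one (hs : ∀ j, (lit j (s j)).2 = f (lit j (s j)).1)
    (u : MecVert X m n) :
    ((mecGraph m n lit e).withinFibers (label lit e s f)).Reachable u
      (vertexOf lit e f (label lit e s f u) 1) := by
  have reach {v w : MecVert X m n} (hvw : (mecGraph m n lit e).Adj v w)
      (hl : label lit e s f v = label lit e s f w) :
      ((mecGraph m n lit e).withinFibers (label lit e s f)).Reachable v w :=
    SimpleGraph.Adj.reachable ⟨hvw, hl⟩
  rcases u with j | ⟨x, i, p⟩
  · have hadj := mecGraph_adj_clause lit e j (s j)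
    rw [hs j] at hadj
    exact reach hadj <| by
      cases hx : f (lit j (s j)).1 <;> simp [label, vertexOf, chosenOcc, cyc, hx]
  · fin_cases p <;> cases hx : f x <;>
      simp [label, vertexOf, cyc, hx, -finRotate_apply, -finRotate_symm_apply]
    · have hadj := mecGraph_adj_w_a lit e x ((finRotate _).symm i)
      rw [Equiv.apply_symm_apply] at hadj
      exact (reach hadj (by simp [label, cyc, hx, -finRotate_apply, -finRotate_symm_apply])).symm
    · exact reach (mecGraph_adj_a_v lit e x i) (by simp [label, hx])
    · exact reach (mecGraph_adj_b_w lit e x i) (by simp [label, hx])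
    · exact (reach (mecGraph_adj_v_b lit e x i) (by simp [label, cyc, hx])).symm

end Reachability

section Counting

variable [Fintype X]

lemma card_compl_range_chosenOcc :
    Nat.card {t // t ∉ Set.range (chosenOcc lit e s)} = 2 * m := by
  have h := Nat.card_congr (Equiv.sumCompl (· ∈ Set.range (chosenOcc lit e s)))
  rw [Nat.card_sum, card_occ lit e] at h
  have : Nat.card {t // t ∈ Set.range (chosenOcc lit e s)} = m := card_range_chosenOcc lit e s
  omega

lemma card_fibers_eq (k : ℕ) :
    Nat.card {c // Nat.card {u // label lit e s f u = c} = k} =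
      Nat.card {t // (if t ∈ Set.range (chosenOcc lit e s) then 4 else 3) = k} +
        Nat.card {_t : Occ X n // 1 = k} := by
  rw [Nat.card_congr Equiv.subtypeSum, Nat.card_sum]
  simp only [card_fiber_inl, card_fiber_inr]

lemma card_fibers_four : Nat.card {c // Nat.card {u // label lit e s f u = c} = 4} = m := by
  rw [card_fibers_eq]
  simp only [ite_eq_iff, Nat.reduceEqDiff, and_true, and_false, or_false, Nat.card_of_isEmpty,
    add_zero]
  exact card_range_chosenOcc lit e s

lemma card_fibers_three : Nat.card {c // Nat.card {u // label lit e s f u = c} = 3} = 2 * m := by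
  rw [card_fibers_eq]
  simp only [ite_eq_iff, Nat.reduceEqDiff, and_true, and_false, false_or, Nat.card_of_isEmpty,
    add_zero]
  exact card_compl_range_chosenOcc lit e s

lemma card_fibers_one : Nat.card {c // Nat.card {u // label lit e s f u = c} = 1} = 3 * m := by
  rw [card_fibers_eq]
  simp only [ite_eq_iff, Nat.reduceEqDiff, and_false, or_false, Nat.card_of_isEmpty,
    Nat.card_subtype_true, zero_add]
  exact card_occ lit e

end Counting

end MecReduction

open SimpleGraph MecReduction in
/-- If the 3-CNF formula is satisfiable, then the MEC reduction graph has a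
spanning subgraph with all components colorful, consisting of exactly `m`
components of size 4, `2m` components of size 3 and `3m` singletons, whose
transitive closure has exactly `12m` edges. -/
theorem stmt14 {X : Type*} [Fintype X] [DecidableEq X] (m : ℕ)
    (lit : Fin m → Fin 3 → X × Bool) (n : X → ℕ)
    (e : ∀ x : X, {q : Fin m × Fin 3 // (lit q.1 q.2).1 = x} ≃ Fin (n x))
    (f : X → Bool) (hf : ∀ j : Fin m, ∃ s : Fin 3, (lit j s).2 = f (lit j s).1) :
    ∃ G'' : SimpleGraph (MecVert X m n), G'' ≤ mecGraph m n lit e ∧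
      (∀ x y : MecVert X m n, G''.Reachable x y → mecColor x = mecColor y → x = y) ∧
      Nat.card {K : G''.ConnectedComponent // Nat.card K.supp = 4} = m ∧
      Nat.card {K : G''.ConnectedComponent // Nat.card K.supp = 3} = 2 * m ∧
      Nat.card {K : G''.ConnectedComponent // Nat.card K.supp = 1} = 3 * m ∧
      Nat.card {p : MecVert X m n × MecVert X m n //
        p.1 ≠ p.2 ∧ G''.Reachable p.1 p.2} / 2 = 12 * m := by
  choose s hs using hf
  have hreach : ∀ u v, ((mecGraph m n lit e).withinFibers (label lit e s f)).Reachable u v ↔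
      label lit e s f u = label lit e s f v :=
    fun _ _ => reachable_withinFibers_iff (hub := (vertexOf lit e f · 1))
      (reachable_vertexOf_one lit e s f hs)
  have hsurj : Function.Surjective (label lit e s f) :=
    fun c => ⟨_, label_vertexOf_one lit e s f c⟩
  have h4 := card_fibers_four lit e s f
  have h3 := card_fibers_three lit e s f
  have h1 := card_fibers_one lit e s f
  rw [← card_connectedComponent_card_supp_eq hreach hsurj] at h4 h3 h1
  refine ⟨_, withinFibers_le, fun u v huv => eq_of_label_eq_of_mecColor_eq lit e s f
    ((hreach u v).1 huv), h4, h3, h1, ?_⟩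
  have hsizes : ∀ K : ((mecGraph m n lit e).withinFibers (label lit e s f)).ConnectedComponent,
      Nat.card K.supp ∈ ({4, 3, 1} : Finset ℕ) := fun K => by
    rw [card_supp_eq_card_fiber hreach hsurj]
    exact card_fiber_mem lit e s f _
  rw [card_reachable_offDiag_eq_sum_card_mul _ hsizes, Finset.sum_insert (by decide),
    Finset.sum_insert (by decide), Finset.sum_singleton, h4, h3, h1]
  omega
end

section
/- Let H be a finite graph with α vertices of color c, n vertices of color a, n vertices of color b, and 2n vertices of color v (α ≤ n), such that every connected component is colorful. Then the number of edges in the transitive closure of H is at most 3α + 3n. -/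
open scoped Classical

/-- If a graph has `n` vertices of color `a`, `n` of color `b`, `α ≤ n` of
color `c` and `2n` of color `v`, and all its connected components are colorful,
then its transitive closure has at most `3α + 3n` edges. -/
theorem stmt15 {V : Type*} [Fintype V] (H : SimpleGraph V) (c : V → Fin 4)
    (α n : ℕ) (hα : α ≤ n)
    (ha : (Finset.univ.filter (fun v : V => c v = 0)).card = n)
    (hb : (Finset.univ.filter (fun v : V => c v = 1)).card = n)
    (hc : (Finset.univ.filter (fun v : V => c v = 2)).card = α)
    (hv : (Finset.univ.filter (fun v : V => c v = 3)).card = 2 * n)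
    (hcolorful : ∀ u v : V, H.Reachable u v → c u = c v → u = v) :
    Nat.card {p : V × V // p.1 ≠ p.2 ∧ H.Reachable p.1 p.2} / 2 ≤ 3 * α + 3 * n := by
  classical
  have hcard : Nat.card {p : V × V // p.1 ≠ p.2 ∧ H.Reachable p.1 p.2}
      = (Finset.univ.filter (fun p : V × V => p.1 ≠ p.2 ∧ H.Reachable p.1 p.2)).card := by
    rw [Nat.card_eq_fintype_card, Fintype.card_subtype]
  set P := Finset.univ.filter (fun p : V × V => p.1 ≠ p.2 ∧ H.Reachable p.1 p.2) with hP
  set g : V × V → V × Fin 4 × Bool := fun p =>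
    if c p.1 = 2 then (p.1, c p.2, true)
    else if c p.2 = 2 then (p.2, c p.1, false)
    else if c p.1 < c p.2 then (p.1, c p.2, true)
    else (p.2, c p.1, false) with hg
  set A : Finset (V × Fin 4 × Bool) :=
    (Finset.univ.filter (fun v : V => c v = 2)) ×ˢ (({0,1,3} : Finset (Fin 4)) ×ˢ Finset.univ) with hA
  set B : Finset (V × Fin 4 × Bool) :=
    (Finset.univ.filter (fun v : V => c v = 0)) ×ˢ (({1,3} : Finset (Fin 4)) ×ˢ Finset.univ) with hB
  set C : Finset (V × Fin 4 × Bool) :=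
    (Finset.univ.filter (fun v : V => c v = 1)) ×ˢ (({3} : Finset (Fin 4)) ×ˢ Finset.univ) with hC
  -- basic facts about pairs in P
  have hPmem : ∀ p : V × V, p ∈ P → p.1 ≠ p.2 ∧ H.Reachable p.1 p.2 := by
    intro p hp
    simpa [hP] using hp
  have hne : ∀ p : V × V, p ∈ P → c p.1 ≠ c p.2 := by
    intro p hp h
    exact (hPmem p hp).1 (hcolorful _ _ (hPmem p hp).2 h)
  -- key structural property of g
  have hgspec : ∀ p : V × V, p ∈ P →
      (((g p).2.2 = true → (g p).1 = p.1 ∧ (g p).2.1 = c p.2) ∧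
       ((g p).2.2 = false → (g p).1 = p.2 ∧ (g p).2.1 = c p.1)) := by
    intro p hp
    simp only [hg]
    split_ifs <;> simp
  -- g maps P into A ∪ B ∪ C
  have hmaps : ∀ p ∈ P, g p ∈ A ∪ B ∪ C := by
    intro p hp
    have hnep := hne p hp
    have key : ∀ x y : Fin 4, x ≠ 2 → y ≠ 2 → x < y →
        (x = 0 ∧ (y = 1 ∨ y = 3)) ∨ (x = 1 ∧ y = 3) := by decide
    have hne13 : ∀ x y : Fin 4, x ≠ y → x = 2 → (y = 0 ∨ y = 1 ∨ y = 3) := by decide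
    simp only [hg]
    split_ifs with h1 h2 h3
    · -- c p.1 = 2
      have := hne13 _ _ hnep h1
      simp [hA, Finset.mem_union, h1]
      tauto
    · have := hne13 (c p.2) (c p.1) (fun h => hnep h.symm) h2
      simp [hA, Finset.mem_union, h2]
      tauto
    · rcases key _ _ h1 h2 h3 with ⟨h0, h13⟩ | ⟨h0, h3'⟩
      · simp [hB, Finset.mem_union, h0]
        tauto
      · simp [hC, Finset.mem_union, h0, h3']
    · have h3' : c p.2 < c p.1 := by
        rcases lt_or_ge (c p.2) (c p.1) with h | h
        · exact h
        · exact absurd (lt_of_le_of_ne h hnep) h3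
      rcases key _ _ h2 h1 h3' with ⟨h0, h13⟩ | ⟨h0, h3''⟩
      · simp [hB, Finset.mem_union, h0]
        tauto
      · simp [hC, Finset.mem_union, h0, h3'']
  -- g is injective on P
  have hinj : Set.InjOn g P := by
    intro p hp q hq hpq
    have hsp := hgspec p hp
    have hsq := hgspec q hq
    have hreachp := (hPmem p hp).2
    have hreachq := (hPmem q hq).2
    have hbb : (g p).2.2 = (g q).2.2 := by rw [hpq]
    have hkk : (g p).1 = (g q).1 := by rw [hpq]
    have hcc : (g p).2.1 = (g q).2.1 := by rw [hpq]
    cases hb : (g p).2.2 with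
    | true =>
        obtain ⟨h1, h2⟩ := hsp.1 hb
        obtain ⟨h1', h2'⟩ := hsq.1 (by rw [← hbb]; exact hb)
        have hu : p.1 = q.1 := by rw [← h1, ← h1', hkk]
        have hcw : c p.2 = c q.2 := by rw [← h2, ← h2', hcc]
        have hw : p.2 = q.2 := by
          apply hcolorful
          · exact hreachp.symm.trans (hu ▸ hreachq)
          · exact hcw
        exact Prod.ext hu hw
    | false =>
        obtain ⟨h1, h2⟩ := hsp.2 hb
        obtain ⟨h1', h2'⟩ := hsq.2 (by rw [← hbb]; exact hb)
        have hw : p.2 = q.2 := by rw [← h1, ← h1', hkk]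
        have hcu : c p.1 = c q.1 := by rw [← h2, ← h2', hcc]
        have hu : p.1 = q.1 := by
          apply hcolorful
          · exact hreachp.trans (hw ▸ hreachq.symm)
          · exact hcu
        exact Prod.ext hu hw
  have hle : P.card ≤ (A ∪ B ∪ C).card :=
    Finset.card_le_card_of_injOn g hmaps hinj
  have hABC : (A ∪ B ∪ C).card ≤ 6 * α + 4 * n + 2 * n := by
    calc (A ∪ B ∪ C).card ≤ (A ∪ B).card + C.card := Finset.card_union_le _ _
      _ ≤ A.card + B.card + C.card := by
          have := Finset.card_union_le A B
          omega
      _ ≤ 6 * α + 4 * n + 2 * n := by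
          have hAcard : A.card = α * 6 := by
            simp [hA, Finset.card_product, hc]
          have hBcard : B.card = n * 4 := by
            simp [hB, Finset.card_product, ha]
          have hCcard : C.card = n * 2 := by
            simp [hC, Finset.card_product, hb]
          omega
  rw [hcard]
  have : P.card ≤ 6 * α + 6 * n := by omega
  omega
end
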